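/- Let (M, g) be a compact Riemannian manifold with boundary Σ, with positive Ricci curvature and with boundary having positive semi-definite second fundamental form. If α is a harmonic 1-form (dα = 0, d*α = 0) satisfying the relative (Dirichlet-type) boundary condition α ∧ n* = 0 on Σ, then the Bochner identity ∫_M (|∇α|² + Ric(α,α)) dv = -∫_Σ H·(α(n))² dσ forces α = 0. -/

import Mathlib

open MeasureTheory

theorem IsOpen.eq_empty_of_integral_eq_zero_of_pos {X : Type*} [TopologicalSpace X]
    [MeasurableSpace X] {μ : Measure X} [μ.IsOpenPosMeasure] {f : X → ℝ} (hf : 0 ≤ f)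
    (hfi : Integrable f μ) (hf0 : ∫ x, f x ∂μ = 0) {U : Set X} (hU : IsOpen U)
    (hpos : ∀ x ∈ U, 0 < f x) : U = ∅ := by
  have hae : f =ᵐ[μ] 0 := (integral_eq_zero_iff_of_nonneg hf hfi).1 hf0
  have hnull : μ {x | f x ≠ 0} = 0 := ae_iff.1 hae
  exact (hU.measure_eq_zero_iff μ).1 <|
    measure_mono_null (fun x hx => (hpos x hx).ne') hnull

theorem bochner_vanishing_relative_general
    {M S : Type*} [TopologicalSpace M] [MeasurableSpace M]
    [MeasurableSpace S]
    (μ : Measure M) [μ.IsOpenPosMeasure]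
    (σ : Measure S)
    {V : Type*} [NormedAddCommGroup V] [NormedSpace ℝ V]
    (α : M → V) (gradSq ric : M → ℝ) (H an : S → ℝ)
    (hαcont : Continuous α)
    (hgrad_nonneg : ∀ x, 0 ≤ gradSq x)
    (hric_nonneg : ∀ x, 0 ≤ ric x)
    (hric_pos : ∀ x, α x ≠ 0 → 0 < ric x)
    (hH : ∀ y, 0 ≤ H y)
    (hint : Integrable (fun x => gradSq x + ric x) μ)
    (hbochner : ∫ x, (gradSq x + ric x) ∂μ = -∫ y, H y * (an y) ^ 2 ∂σ) :
    ∀ x, α x = 0 := by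
  have hdensity_nonneg : ∀ x, 0 ≤ gradSq x + ric x :=
    fun x => add_nonneg (hgrad_nonneg x) (hric_nonneg x)
  have hboundary_nonneg : 0 ≤ ∫ y, H y * (an y) ^ 2 ∂σ :=
    integral_nonneg fun y => mul_nonneg (hH y) (sq_nonneg _)
  have hzero : ∫ x, (gradSq x + ric x) ∂μ = 0 :=
    le_antisymm (hbochner ▸ neg_nonpos.2 hboundary_nonneg) (integral_nonneg hdensity_nonneg)
  have hsupport : Function.support α = ∅ :=
    hαcont.isOpen_support.eq_empty_of_integral_eq_zero_of_pos hdensity_nonneg hint hzero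
      fun x hx => add_pos_of_nonneg_of_pos (hgrad_nonneg x) (hric_pos x hx)
  exact congrFun (Function.support_eq_empty_iff.1 hsupport)

/-- Bochner vanishing for relative harmonic 1-forms: if the Bochner identity
`∫_M (|∇α|² + Ric(α,α)) dv = -∫_Σ H (α(n))² dσ` holds, the Ricci curvature is
pointwise positive (on nonzero vectors) and the mean curvature `H` of the
boundary is nonnegative (positive semi-definite second fundamental form),
then the harmonic 1-form `α` with `α ∧ n* = 0` on `Σ` vanishes identically.
Here `gradSq x = |∇α|²(x)` and `ric x = Ric(α,α)(x)` pointwise on `M`, and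
`an y = α(n)(y)` on the boundary `Σ`. -/
theorem bochner_vanishing_relative
    {M S : Type*} [TopologicalSpace M] [MeasurableSpace M]
    [MeasurableSpace S]
    (μ : Measure M) [μ.IsOpenPosMeasure]
    (σ : Measure S)
    {V : Type*} [NormedAddCommGroup V] [NormedSpace ℝ V]
    (α : M → V) (gradSq ric : M → ℝ) (H an : S → ℝ)
    (hαcont : Continuous α)
    (hriccont : Continuous ric)
    (hgrad_nonneg : ∀ x, 0 ≤ gradSq x)
    (hric_nonneg : ∀ x, 0 ≤ ric x)
    (hric_pos : ∀ x, α x ≠ 0 → 0 < ric x)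
    (hH : ∀ y, 0 ≤ H y)
    (hint : Integrable (fun x => gradSq x + ric x) μ)
    (hbint : Integrable (fun y => H y * (an y) ^ 2) σ)
    (hbochner : ∫ x, (gradSq x + ric x) ∂μ = -∫ y, H y * (an y) ^ 2 ∂σ) :
    ∀ x, α x = 0 :=
  bochner_vanishing_relative_general μ σ α gradSq ric H an hαcont hgrad_nonneg hric_nonneg hric_pos
    hH hint hbochner
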